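/- For any γ ∈ (0,1), a ∈ [0,1] and G ∈ ℝ, one has 2γ(1-a)(e^G - 1) + 2(1-γ)a(e^{-G} - 1) + 2(a - γ)G ≥ 0, with equality when G = 0. -/
import Mathlib

/-- For γ ∈ (0,1), a ∈ [0,1], G ∈ ℝ:
2γ(1-a)(e^G-1) + 2(1-γ)a(e^{-G}-1) + 2(a-γ)G ≥ 0, with equality at G = 0. -/
theorem stmt_4 (γ a : ℝ) (hγ : γ ∈ Set.Ioo (0:ℝ) 1) (ha : a ∈ Set.Icc (0:ℝ) 1) :
    (∀ G : ℝ,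
      0 ≤ 2 * γ * (1 - a) * (Real.exp G - 1) + 2 * (1 - γ) * a * (Real.exp (-G) - 1) +
        2 * (a - γ) * G) ∧
    2 * γ * (1 - a) * (Real.exp 0 - 1) + 2 * (1 - γ) * a * (Real.exp (-0) - 1) +
      2 * (a - γ) * 0 = 0 := by
  obtain ⟨hγ0, hγ1⟩ := hγ
  obtain ⟨ha0, ha1⟩ := ha
  constructor
  · intro G
    have h1 : G + 1 ≤ Real.exp G := Real.add_one_le_exp G
    have h2 : -G + 1 ≤ Real.exp (-G) := Real.add_one_le_exp (-G)
    have key : 2 * γ * (1 - a) * (Real.exp G - 1) + 2 * (1 - γ) * a * (Real.exp (-G) - 1) +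
        2 * (a - γ) * G
        = 2 * γ * (1 - a) * (Real.exp G - 1 - G) + 2 * (1 - γ) * a * (Real.exp (-G) - 1 + G) := by
      ring
    rw [key]
    have c1 : (0:ℝ) ≤ 2 * γ * (1 - a) := by nlinarith
    have c2 : (0:ℝ) ≤ 2 * (1 - γ) * a := by nlinarith
    nlinarith [mul_nonneg c1 (by linarith : (0:ℝ) ≤ Real.exp G - 1 - G),
      mul_nonneg c2 (by linarith : (0:ℝ) ≤ Real.exp (-G) - 1 + G)]
  · simp [Real.exp_zero]
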